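/- Let S be a restriction semigroup with projections E in which all nonempty compatible joins exist. If multiplication by projections distributes over compatible joins of projections (equivalently, E is a frame), then multiplication distributes over all nonempty compatible joins: b(⋁A) = ⋁_{a∈A} ba and (⋁A)b = ⋁_{a∈A} ab for every compatible family A. -/
import Mathlib


structure EhresmannSemigroup (S : Type*) [Semigroup S] where
  E : Set S
  E_nonempty : E.Nonempty
  idem : ∀ a ∈ E, a * a = a
  comm : ∀ a ∈ E, ∀ b ∈ E, a * b = b * a
  mul_mem : ∀ a ∈ E, ∀ b ∈ E, a * b ∈ E
  lam : S → S
  rho : S → S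
  lam_mem : ∀ a, lam a ∈ E
  rho_mem : ∀ a, rho a ∈ E
  lam_proj : ∀ a ∈ E, lam a = a
  rho_proj : ∀ a ∈ E, rho a = a
  mul_lam : ∀ a, a * lam a = a
  rho_mul : ∀ a, rho a * a = a
  lam_lam : ∀ a b, lam (lam a * b) = lam (a * b)
  rho_rho : ∀ a b, rho (a * rho b) = rho (a * b)

/-- The natural partial order: `a ≤ b` iff `a = e * b = b * f` for some projections `e, f`. -/
def EhresmannSemigroup.nle {S : Type*} [Semigroup S] (R : EhresmannSemigroup S)
    (a b : S) : Prop :=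
  ∃ e ∈ R.E, ∃ f ∈ R.E, a = e * b ∧ a = b * f

structure RestrictionSemigroup (S : Type*) [Semigroup S] extends EhresmannSemigroup S where
  bd_left : ∀ a, ∀ f ∈ E, f * a = a * lam (f * a)
  bd_right : ∀ a, ∀ f ∈ E, a * f = rho (a * f) * a

namespace RestrictionSemigroup

variable {S : Type*} [Semigroup S]

def nle (R : RestrictionSemigroup S) : S → S → Prop :=
  R.toEhresmannSemigroup.nle

/-- Compatibility of two elements. -/
def compat (R : RestrictionSemigroup S) (a b : S) : Prop :=
  a * R.lam b = b * R.lam a ∧ R.rho b * a = R.rho a * b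

/-- `s` is the join (least upper bound) of `A` w.r.t. the natural partial order. -/
def isJoin (R : RestrictionSemigroup S) (A : Set S) (s : S) : Prop :=
  (∀ a ∈ A, R.nle a s) ∧ ∀ t, (∀ a ∈ A, R.nle a t) → R.nle s t

/-- `z` is the meet (greatest lower bound) of `A` w.r.t. the natural partial order. -/
def isMeet (R : RestrictionSemigroup S) (A : Set S) (z : S) : Prop :=
  (∀ a ∈ A, R.nle z a) ∧ ∀ w, (∀ a ∈ A, R.nle w a) → R.nle w z

end RestrictionSemigroup

namespace RestrictionSemigroup

variable {S : Type*} [Semigroup S] (R : RestrictionSemigroup S)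

lemma nle_def' (a b : S) : R.nle a b ↔ ∃ e ∈ R.E, ∃ f ∈ R.E, a = e * b ∧ a = b * f :=
  Iff.rfl

lemma lam_mul_proj' (x : S) {f : S} (hf : f ∈ R.E) :
    R.lam (x * f) = R.lam x * f := by
  rw [← R.lam_lam x f, R.lam_proj _ (R.mul_mem _ (R.lam_mem x) _ hf)]

lemma rho_proj_mul' (x : S) {f : S} (hf : f ∈ R.E) :
    R.rho (f * x) = f * R.rho x := by
  rw [← R.rho_rho f x, R.rho_proj _ (R.mul_mem _ hf _ (R.rho_mem x))]

lemma nle_of_mul_proj' {a b f : S} (hf : f ∈ R.E) (h : a = b * f) : R.nle a b := by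
  refine ⟨R.rho a, R.rho_mem a, f, hf, ?_, h⟩
  rw [h]
  exact R.bd_right b f hf

lemma nle_of_proj_mul' {a b e : S} (he : e ∈ R.E) (h : a = e * b) : R.nle a b := by
  refine ⟨e, he, R.lam a, R.lam_mem a, h, ?_⟩
  rw [h]
  exact R.bd_left b e he

lemma eq_mul_lam_of_nle' {a b : S} (h : R.nle a b) : a = b * R.lam a := by
  obtain ⟨e, he, f, hf, h1, h2⟩ := h
  have hl : R.lam a = R.lam b * f := by rw [h2, R.lam_mul_proj' b hf]
  rw [hl, ← mul_assoc, R.mul_lam]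
  exact h2

lemma eq_rho_mul_of_nle' {a b : S} (h : R.nle a b) : a = R.rho a * b := by
  obtain ⟨e, he, f, hf, h1, h2⟩ := h
  have hr : R.rho a = e * R.rho b := by rw [h1, R.rho_proj_mul' b he]
  rw [hr, mul_assoc, R.rho_mul]
  exact h1

lemma nle_antisymm' {a b : S} (h1 : R.nle a b) (h2 : R.nle b a) : a = b := by
  have ha := R.eq_mul_lam_of_nle' h1
  have hb := R.eq_mul_lam_of_nle' h2
  calc a = b * R.lam a := ha
    _ = (a * R.lam b) * R.lam a := by rw [← hb]
    _ = a * (R.lam a * R.lam b) := by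
        rw [mul_assoc, R.comm _ (R.lam_mem b) _ (R.lam_mem a)]
    _ = (a * R.lam a) * R.lam b := by rw [mul_assoc]
    _ = a * R.lam b := by rw [R.mul_lam]
    _ = b := hb.symm

lemma lam_nle_of_nle' {a b : S} (h : R.nle a b) : R.nle (R.lam a) (R.lam b) := by
  have ha := R.eq_mul_lam_of_nle' h
  have h2 : R.lam a = R.lam b * R.lam a := by
    conv_lhs => rw [ha]
    rw [R.lam_mul_proj' b (R.lam_mem a)]
  exact R.nle_of_mul_proj' (R.lam_mem a) h2

lemma rho_nle_of_nle' {a b : S} (h : R.nle a b) : R.nle (R.rho a) (R.rho b) := by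
  have ha := R.eq_rho_mul_of_nle' h
  have h2 : R.rho a = R.rho a * R.rho b := by
    conv_lhs => rw [ha]
    rw [R.rho_proj_mul' b (R.rho_mem a)]
  exact R.nle_of_proj_mul' (R.rho_mem a) h2

lemma compat_of_nle' {x y c : S} (hx : R.nle x c) (hy : R.nle y c) : R.compat x y := by
  have hx1 := R.eq_mul_lam_of_nle' hx
  have hy1 := R.eq_mul_lam_of_nle' hy
  have hx2 := R.eq_rho_mul_of_nle' hx
  have hy2 := R.eq_rho_mul_of_nle' hy
  constructor
  · have e1 : x * R.lam y = c * (R.lam x * R.lam y) := by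
      conv_lhs => rw [hx1]
      rw [mul_assoc]
    have e2 : y * R.lam x = c * (R.lam y * R.lam x) := by
      conv_lhs => rw [hy1]
      rw [mul_assoc]
    rw [e1, e2, R.comm _ (R.lam_mem x) _ (R.lam_mem y)]
  · have e1 : R.rho y * x = (R.rho y * R.rho x) * c := by
      conv_lhs => rw [hx2]
      rw [mul_assoc]
    have e2 : R.rho x * y = (R.rho x * R.rho y) * c := by
      conv_lhs => rw [hy2]
      rw [mul_assoc]
    rw [e1, e2, R.comm _ (R.rho_mem y) _ (R.rho_mem x)]

lemma isJoin_lam'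
    (hjoins : ∀ A : Set S, A.Nonempty → (∀ a ∈ A, ∀ b ∈ A, R.compat a b) →
      ∃ s, R.isJoin A s)
    {A : Set S} (hne : A.Nonempty) {s : S} (hs : R.isJoin A s) :
    R.isJoin (R.lam '' A) (R.lam s) := by
  have hub : ∀ x ∈ R.lam '' A, R.nle x (R.lam s) := by
    rintro x ⟨a, ha, rfl⟩
    exact R.lam_nle_of_nle' (hs.1 a ha)
  obtain ⟨u, hu⟩ := hjoins (R.lam '' A) (hne.image _)
    (fun x hx y hy => R.compat_of_nle' (hub x hx) (hub y hy))
  have huls : R.nle u (R.lam s) := hu.2 _ hub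
  have huE : u ∈ R.E := by
    obtain ⟨e, he, f, hf, h1, h2⟩ := huls
    rw [h1]
    exact R.mul_mem _ he _ (R.lam_mem s)
  have hsu : ∀ a ∈ A, R.nle a (s * u) := by
    intro a ha
    have h1 : a = s * R.lam a := R.eq_mul_lam_of_nle' (hs.1 a ha)
    have h2 : R.lam a = u * R.lam a := by
      have h := R.eq_mul_lam_of_nle' (hu.1 _ ⟨a, ha, rfl⟩)
      rwa [R.lam_proj _ (R.lam_mem a)] at h
    have h3 : a = (s * u) * R.lam a := by
      rw [mul_assoc, ← h2]
      exact h1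
    exact R.nle_of_mul_proj' (R.lam_mem a) h3
  have h3 : R.nle s (s * u) := hs.2 _ hsu
  have h4 : R.nle (s * u) s := R.nle_of_mul_proj' huE rfl
  have h5 : s * u = s := R.nle_antisymm' h4 h3
  have h6 : R.lam s = R.lam s * u := by
    conv_lhs => rw [← h5]
    rw [R.lam_mul_proj' s huE]
  have h7 : R.nle (R.lam s) u := R.nle_of_proj_mul' (R.lam_mem s) h6
  exact (R.nle_antisymm' huls h7) ▸ hu

lemma isJoin_rho'
    (hjoins : ∀ A : Set S, A.Nonempty → (∀ a ∈ A, ∀ b ∈ A, R.compat a b) →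
      ∃ s, R.isJoin A s)
    {A : Set S} (hne : A.Nonempty) {s : S} (hs : R.isJoin A s) :
    R.isJoin (R.rho '' A) (R.rho s) := by
  have hub : ∀ x ∈ R.rho '' A, R.nle x (R.rho s) := by
    rintro x ⟨a, ha, rfl⟩
    exact R.rho_nle_of_nle' (hs.1 a ha)
  obtain ⟨u, hu⟩ := hjoins (R.rho '' A) (hne.image _)
    (fun x hx y hy => R.compat_of_nle' (hub x hx) (hub y hy))
  have hurs : R.nle u (R.rho s) := hu.2 _ hub
  have huE : u ∈ R.E := by
    obtain ⟨e, he, f, hf, h1, h2⟩ := hurs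
    rw [h1]
    exact R.mul_mem _ he _ (R.rho_mem s)
  have hus : ∀ a ∈ A, R.nle a (u * s) := by
    intro a ha
    have h1 : a = R.rho a * s := R.eq_rho_mul_of_nle' (hs.1 a ha)
    have h2 : R.rho a = R.rho a * u := by
      have h := R.eq_rho_mul_of_nle' (hu.1 _ ⟨a, ha, rfl⟩)
      rwa [R.rho_proj _ (R.rho_mem a)] at h
    have h3 : a = R.rho a * (u * s) := by
      rw [← mul_assoc, ← h2]
      exact h1
    exact R.nle_of_proj_mul' (R.rho_mem a) h3
  have h3 : R.nle s (u * s) := hs.2 _ hus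
  have h4 : R.nle (u * s) s := R.nle_of_proj_mul' huE rfl
  have h5 : u * s = s := R.nle_antisymm' h4 h3
  have h6 : R.rho s = u * R.rho s := by
    conv_lhs => rw [← h5]
    rw [R.rho_proj_mul' s huE]
  have h7 : R.nle (R.rho s) u := R.nle_of_mul_proj' (R.rho_mem s) h6
  exact (R.nle_antisymm' hurs h7) ▸ hu



lemma left_distrib_aux'
    (hjoins : ∀ A : Set S, A.Nonempty → (∀ a ∈ A, ∀ b ∈ A, R.compat a b) →
      ∃ s, R.isJoin A s)
    (hE : ∀ e ∈ R.E, ∀ A ⊆ R.E, ∀ s, R.isJoin A s →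
      R.isJoin ((fun a => e * a) '' A) (e * s))
    (b : S) {A : Set S} (hne : A.Nonempty) {s : S} (hs : R.isJoin A s) :
    R.isJoin ((fun a => b * a) '' A) (b * s) := by
  have key : ∀ a ∈ A, b * a = (b * s) * R.lam a := by
    intro a ha
    rw [mul_assoc, ← R.eq_mul_lam_of_nle' (hs.1 a ha)]
  have hub : ∀ x ∈ (fun a => b * a) '' A, R.nle x (b * s) := by
    rintro x ⟨a, ha, rfl⟩
    exact R.nle_of_mul_proj' (R.lam_mem a) (key a ha)
  obtain ⟨j, hj⟩ := hjoins _ (hne.image _)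
    (fun x hx y hy => R.compat_of_nle' (hub x hx) (hub y hy))
  have hjbs : R.nle j (b * s) := hj.2 _ hub
  have hlam : ∀ a ∈ A, R.lam (b * a) = R.lam (b * s) * R.lam a := by
    intro a ha
    rw [key a ha, R.lam_mul_proj' _ (R.lam_mem a)]
  have himg : R.lam '' ((fun a => b * a) '' A) =
      (fun a => R.lam (b * s) * a) '' (R.lam '' A) := by
    rw [Set.image_image, Set.image_image]
    exact Set.image_congr hlam
  have hEj := hE (R.lam (b * s)) (R.lam_mem _) (R.lam '' A)
    (by rintro x ⟨a, ha, rfl⟩; exact R.lam_mem a) (R.lam s)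
    (R.isJoin_lam' hjoins hne hs)
  have h1 : R.lam (b * s) * R.lam s = R.lam (b * s) := by
    rw [← R.lam_mul_proj' (b * s) (R.lam_mem s), mul_assoc, R.mul_lam]
  rw [h1, ← himg] at hEj
  have hlj1 : R.nle (R.lam j) (R.lam (b * s)) := R.lam_nle_of_nle' hjbs
  have hlj2 : R.nle (R.lam (b * s)) (R.lam j) := hEj.2 _ (by
    rintro x ⟨y, hy, rfl⟩
    exact R.lam_nle_of_nle' (hj.1 y hy))
  have hlj : R.lam j = R.lam (b * s) := R.nle_antisymm' hlj1 hlj2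
  have hjeq : j = b * s := by
    have h2 := R.eq_mul_lam_of_nle' hjbs
    rwa [hlj, R.mul_lam] at h2
  exact hjeq ▸ hj

lemma right_distrib_aux'
    (hjoins : ∀ A : Set S, A.Nonempty → (∀ a ∈ A, ∀ b ∈ A, R.compat a b) →
      ∃ s, R.isJoin A s)
    (hE : ∀ e ∈ R.E, ∀ A ⊆ R.E, ∀ s, R.isJoin A s →
      R.isJoin ((fun a => e * a) '' A) (e * s))
    (b : S) {A : Set S} (hne : A.Nonempty) {s : S} (hs : R.isJoin A s) :
    R.isJoin ((fun a => a * b) '' A) (s * b) := by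
  have key : ∀ a ∈ A, a * b = R.rho a * (s * b) := by
    intro a ha
    rw [← mul_assoc, ← R.eq_rho_mul_of_nle' (hs.1 a ha)]
  have hub : ∀ x ∈ (fun a => a * b) '' A, R.nle x (s * b) := by
    rintro x ⟨a, ha, rfl⟩
    exact R.nle_of_proj_mul' (R.rho_mem a) (key a ha)
  obtain ⟨j, hj⟩ := hjoins _ (hne.image _)
    (fun x hx y hy => R.compat_of_nle' (hub x hx) (hub y hy))
  have hjsb : R.nle j (s * b) := hj.2 _ hub
  have hrho : ∀ a ∈ A, R.rho (a * b) = R.rho (s * b) * R.rho a := by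
    intro a ha
    rw [key a ha, R.rho_proj_mul' _ (R.rho_mem a),
      R.comm _ (R.rho_mem a) _ (R.rho_mem (s * b))]
  have himg : R.rho '' ((fun a => a * b) '' A) =
      (fun a => R.rho (s * b) * a) '' (R.rho '' A) := by
    rw [Set.image_image, Set.image_image]
    exact Set.image_congr hrho
  have hEj := hE (R.rho (s * b)) (R.rho_mem _) (R.rho '' A)
    (by rintro x ⟨a, ha, rfl⟩; exact R.rho_mem a) (R.rho s)
    (R.isJoin_rho' hjoins hne hs)
  have h1 : R.rho (s * b) * R.rho s = R.rho (s * b) := by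
    rw [R.comm _ (R.rho_mem (s * b)) _ (R.rho_mem s),
      ← R.rho_proj_mul' (s * b) (R.rho_mem s), ← mul_assoc, R.rho_mul]
  rw [h1, ← himg] at hEj
  have hrj1 : R.nle (R.rho j) (R.rho (s * b)) := R.rho_nle_of_nle' hjsb
  have hrj2 : R.nle (R.rho (s * b)) (R.rho j) := hEj.2 _ (by
    rintro x ⟨y, hy, rfl⟩
    exact R.rho_nle_of_nle' (hj.1 y hy))
  have hrj : R.rho j = R.rho (s * b) := R.nle_antisymm' hrj1 hrj2
  have hjeq : j = s * b := by
    have h2 := R.eq_rho_mul_of_nle' hjsb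
    rwa [hrj, R.rho_mul] at h2
  exact hjeq ▸ hj

end RestrictionSemigroup

/-- If all nonempty compatible joins exist and multiplication by projections
distributes over joins of projections, then multiplication distributes over all
nonempty compatible joins. -/
theorem restriction_mul_distributes_over_compatible_joins {S : Type*} [Semigroup S]
    (R : RestrictionSemigroup S)
    (hjoins : ∀ A : Set S, A.Nonempty → (∀ a ∈ A, ∀ b ∈ A, R.compat a b) →
      ∃ s, R.isJoin A s)
    (hE : ∀ e ∈ R.E, ∀ A ⊆ R.E, ∀ s, R.isJoin A s →
      R.isJoin ((fun a => e * a) '' A) (e * s)) :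
    ∀ b : S, ∀ A : Set S, A.Nonempty → (∀ x ∈ A, ∀ y ∈ A, R.compat x y) →
      ∀ s, R.isJoin A s →
        R.isJoin ((fun a => b * a) '' A) (b * s) ∧
        R.isJoin ((fun a => a * b) '' A) (s * b) := by
  intro b A hne _ s hs
  exact ⟨R.left_distrib_aux' hjoins hE b hne hs, R.right_distrib_aux' hjoins hE b hne hs⟩
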